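/- If f : Z_k^n → Z_k depends essentially on all n ≥ 1 of its variables, then there exists a variable ordering such that the corresponding reduced ordered decision diagram D_f of f has depth exactly n + 1, i.e., contains a path from the function node to a leaf passing through non-terminal nodes labelled by all n essential variables. -/

import Mathlib

open scoped Classical

namespace Paper

/-- A `k`-valued function of `n` variables. -/
abbrev Fn (k n : ℕ) : Type := (Fin n → ZMod k) → ZMod k

/-- `x i` is an essential variable of `f`. -/
def Essential {k n : ℕ} (f : Fn k n) (i : Fin n) : Prop :=
  ∃ (a : Fin n → ZMod k) (b : ZMod k), f (Function.update a i b) ≠ f a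

/-- The set of essential variables of `f`. -/
def Ess {k n : ℕ} (f : Fn k n) : Set (Fin n) := {i | Essential f i}

/-- The subfunction `f(x i = c)`. -/
def substVar {k n : ℕ} (f : Fn k n) (i : Fin n) (c : ZMod k) : Fn k n :=
  fun a => f (Function.update a i c)

/-- Substitute the constants `c` for all variables in the set `J`. -/
noncomputable def substSet {k n : ℕ} (f : Fn k n) (J : Set (Fin n)) (c : Fin n → ZMod k) : Fn k n :=
  fun a => f (fun i => if i ∈ J then c i else a i)

/-- `g` is a simple subfunction of `f`: obtained by substituting a constant
for an essential variable of `f`. -/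
def SimpleSub {k n : ℕ} (g f : Fn k n) : Prop :=
  ∃ i ∈ Ess f, ∃ c : ZMod k, g = substVar f i c

/-- `Sub f` is the set of all subfunctions of `f` (reflexive-transitive closure of
the simple subfunction relation). -/
def Sub {k n : ℕ} (f : Fn k n) : Set (Fn k n) :=
  {g | Relation.ReflTransGen (fun u v => SimpleSub v u) f g}

/-- `M` is a separable set of variables in `f`: `M = Ess g` for some subfunction `g`. -/
def Separable {k n : ℕ} (f : Fn k n) (M : Set (Fin n)) : Prop :=
  ∃ g ∈ Sub f, Ess g = M

/-- Separability phrased via simultaneous substitution for a set of variables. -/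
def SeparableS {k n : ℕ} (f : Fn k n) (M : Set (Fin n)) : Prop :=
  ∃ (J : Set (Fin n)) (c : Fin n → ZMod k), Ess (substSet f J c) = M

/-- `J` is a set of essential variables disjoint from `M` such that every assignment of
constants to `J` destroys some variable of `M`. -/
def Kills {k n : ℕ} (f : Fn k n) (M J : Set (Fin n)) : Prop :=
  J ⊆ Ess f ∧ J ∩ M = ∅ ∧ ∀ c : Fin n → ZMod k, ¬ M ⊆ Ess (substSet f J c)

/-- `Dis f M` : the family of all distributive sets of `M` in `f`
(inclusion-minimal sets `J` with `Kills f M J`). -/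
def Dis {k n : ℕ} (f : Fn k n) (M : Set (Fin n)) : Set (Set (Fin n)) :=
  {J | Kills f M J ∧ ∀ J' ⊆ J, Kills f M J' → J' = J}

/-- `β` is an s-system of the family `F`. -/
def IsSSystem {n : ℕ} (F : Set (Set (Fin n))) (β : Set (Fin n)) : Prop :=
  (∀ P ∈ F, (β ∩ P).Nonempty) ∧ ∀ x ∈ β, ∃ P ∈ F, P ∩ β = {x}

/-- `x i` is a strongly essential variable of `f`. -/
def StronglyEssential {k n : ℕ} (f : Fn k n) (i : Fin n) : Prop :=
  i ∈ Ess f ∧ ∃ c : ZMod k, Ess (substVar f i c) = Ess f \ {i}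

/-- The number of subfunctions of `f` having exactly `m` essential variables. -/
noncomputable def subCount {k n : ℕ} (f : Fn k n) (m : ℕ) : ℕ :=
  Set.ncard {g ∈ Sub f | (Ess g).ncard = m}

/-- `IsImp f l c` : the list `l` of (variable, constant) substitutions together with the
final value `c` is an implementation of `f`, i.e. a root-to-leaf path in a reduced
ordered decision diagram of `f`: each substituted variable is essential in the current
subfunction, and the final subfunction is the constant `c`. -/
inductive IsImp {k n : ℕ} : Fn k n → List (Fin n × ZMod k) → ZMod k → Prop
  | const (f : Fn k n) (c : ZMod k) : (∀ a, f a = c) → IsImp f [] c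
  | step (f : Fn k n) (i : Fin n) (a : ZMod k) (l : List (Fin n × ZMod k)) (c : ZMod k) :
      i ∈ Ess f → IsImp (substVar f i a) l c → IsImp f ((i, a) :: l) c

/-- The number of implementations of `f`. -/
noncomputable def imp {k n : ℕ} (f : Fn k n) : ℕ :=
  Set.ncard {p : List (Fin n × ZMod k) × ZMod k | IsImp f p.1 p.2}

end Paper

/-!
Among all substitutions `x i = c` with `x i` essential, take one that keeps the most essential
variables. If it also killed some other variable `x j`, then `f(x i = c)` does not depend on
`x j`, so it equals `f(x j = d, x i = c)` for every `d`, and for a suitable `d` the variable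
`x i` is essential in `f(x j = d)`; then `f(x j = d)` keeps strictly more essential variables.
Hence every nonconstant function has a strongly essential variable, and substituting for such
variables one at a time removes exactly one essential variable per step.
-/

namespace Paper

variable {k n : ℕ}

lemma substVar_apply_of_eq (f : Fn k n) {j : Fin n} {d : ZMod k} {x : Fin n → ZMod k}
    (hx : x j = d) : substVar f j d x = f x := by
  rw [substVar, Function.update_eq_self_iff.mpr hx.symm]

lemma substVar_comm (f : Fn k n) {i j : Fin n} (hij : i ≠ j) (c d : ZMod k) :
    substVar (substVar f i c) j d = substVar (substVar f j d) i c := by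
  funext x
  simp only [substVar, Function.update_comm hij]

lemma substVar_eq_self_of_notMem_ess {f : Fn k n} {j : Fin n} (hj : j ∉ Ess f) (d : ZMod k) :
    substVar f j d = f := by
  funext x
  by_contra h
  exact hj ⟨x, d, h⟩

lemma ess_substVar_subset (f : Fn k n) (i : Fin n) (c : ZMod k) :
    Ess (substVar f i c) ⊆ Ess f \ {i} := by
  rintro j ⟨a, b, hab⟩
  have hji : j ≠ i := by
    rintro rfl
    exact hab (by simp only [substVar, Function.update_idem])
  refine ⟨⟨Function.update a i c, b, ?_⟩, hji⟩
  rwa [substVar, substVar, Function.update_comm hji] at hab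

lemma eq_const_of_ess_eq_empty {f : Fn k n} (h : Ess f = ∅) : ∃ d, ∀ a, f a = d := by
  have hupdate : ∀ (x : Fin n → ZMod k) i b, f (Function.update x i b) = f x := fun x i b => by
    by_contra hne
    exact h.subset ⟨x, b, hne⟩
  refine ⟨f 0, fun a => ?_⟩
  have hpiecewise : ∀ s : Finset (Fin n), f (s.piecewise a 0) = f 0 := by
    intro s
    induction s using Finset.induction_on with
    | empty => rw [Finset.piecewise_empty]
    | insert i s _ ih => rw [Finset.piecewise_insert, hupdate, ih]
  simpa using hpiecewise Finset.univ

lemma mem_ess_substVar_of_apply_update_ne {f : Fn k n} {i j : Fin n} (hij : i ≠ j) {c : ZMod k}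
    {x : Fin n → ZMod k} (hx : f (Function.update x i c) ≠ f x) :
    i ∈ Ess (substVar f j (x j)) := by
  refine ⟨x, c, ?_⟩
  rwa [substVar_apply_of_eq f rfl, substVar_apply_of_eq f (Function.update_of_ne hij.symm c x)]

lemma exists_mem_ess_substVar_of_notMem {f : Fn k n} {i j : Fin n} (hij : i ≠ j) {c : ZMod k}
    (hj : j ∈ Ess f) (hjc : j ∉ Ess (substVar f i c)) : ∃ d, i ∈ Ess (substVar f j d) := by
  obtain ⟨a, b, hab⟩ := hj
  have hindep : f (Function.update (Function.update a j b) i c) = f (Function.update a i c) :=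
    congrFun (substVar_eq_self_of_notMem_ess hjc b) a
  by_cases ha : f (Function.update a i c) = f a
  · refine ⟨b, ?_⟩
    simpa using mem_ess_substVar_of_apply_update_ne (x := Function.update a j b) hij
      (by rw [hindep, ha]; exact hab.symm)
  · exact ⟨_, mem_ess_substVar_of_apply_update_ne hij ha⟩

lemma exists_ncard_ess_substVar_lt {f : Fn k n} {i : Fin n} {c : ZMod k}
    (hc : Ess (substVar f i c) ≠ Ess f \ {i}) :
    ∃ j ∈ Ess f, ∃ d, (Ess (substVar f i c)).ncard < (Ess (substVar f j d)).ncard := by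
  obtain ⟨j, ⟨hj, hji⟩, hjc⟩ :=
    Set.exists_of_ssubset ((ess_substVar_subset f i c).ssubset_of_ne hc)
  have hij : i ≠ j := Ne.symm hji
  obtain ⟨d, hid⟩ := exists_mem_ess_substVar_of_notMem hij hj hjc
  have hsub : Ess (substVar f i c) ⊆ Ess (substVar f j d) := by
    calc Ess (substVar f i c) = Ess (substVar (substVar f j d) i c) := by
          rw [← substVar_comm f hij, substVar_eq_self_of_notMem_ess hjc]
      _ ⊆ Ess (substVar f j d) := (ess_substVar_subset _ i c).trans Set.sdiff_subset
  have hi : i ∉ Ess (substVar f i c) := fun h => (ess_substVar_subset f i c h).2 rfl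
  exact ⟨j, hj, d, Set.ncard_lt_ncard ((Set.ssubset_iff_of_subset hsub).mpr ⟨i, hid, hi⟩)⟩

lemma exists_stronglyEssential {f : Fn k n} (hf : (Ess f).Nonempty) :
    ∃ i, StronglyEssential f i := by
  obtain ⟨i₀, hi₀⟩ := hf
  obtain ⟨⟨i, c⟩, hi, hmax⟩ :=
    (measure fun p : Fin n × ZMod k => n - (Ess (substVar f p.1 p.2)).ncard).wf.has_min
      {p | p.1 ∈ Ess f} ⟨(i₀, 0), hi₀⟩
  refine ⟨i, hi, c, ?_⟩
  by_contra hc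
  obtain ⟨j, hj, d, hlt⟩ := exists_ncard_ess_substVar_lt hc
  have hle : (Ess (substVar f j d)).ncard ≤ n := by
    simpa using Set.ncard_le_card (Ess (substVar f j d))
  exact hmax (j, d) hj
    (show n - (Ess (substVar f j d)).ncard < n - (Ess (substVar f i c)).ncard by omega)

theorem exists_chain_of_ncard_ess {f : Fn k n} {m : ℕ} (hf : (Ess f).ncard = m) :
    ∃ g : ℕ → Fn k n, g m = f ∧
      (∀ t < m, SimpleSub (g t) (g (t + 1))) ∧ ∃ d, ∀ a, g 0 a = d := by
  induction m generalizing f with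
  | zero =>
    have hconst := eq_const_of_ess_eq_empty ((Set.ncard_eq_zero (Set.toFinite _)).mp hf)
    exact ⟨fun _ => f, rfl, fun t ht => absurd ht (Nat.not_lt_zero t), hconst⟩
  | succ m ih =>
    obtain ⟨i, hi, c, hic⟩ := exists_stronglyEssential
      (Set.nonempty_of_ncard_ne_zero (s := Ess f) (by omega))
    obtain ⟨g, hgm, hg, hconst⟩ := ih (f := substVar f i c) (by
      rw [hic, Set.ncard_sdiff_singleton_of_mem hi, hf, Nat.add_sub_cancel])
    refine ⟨Function.update g (m + 1) f, Function.update_self .., fun t ht => ?_, ?_⟩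
    · rw [Function.update_of_ne (by omega)]
      rcases (Nat.lt_succ_iff_lt_or_eq.mp ht) with ht | rfl
      · rw [Function.update_of_ne (by omega)]
        exact hg t ht
      · rw [Function.update_self, hgm]
        exact ⟨i, hi, c, rfl⟩
    · rwa [Function.update_of_ne (by omega)]

end Paper

open Paper in
theorem exists_full_depth_odd_general {k n : ℕ} (f : Fn k n)
    (hfull : Ess f = Set.univ) :
    ∃ g : ℕ → Fn k n, g n = f ∧
      (∀ t < n, SimpleSub (g t) (g (t + 1))) ∧
      (∃ d : ZMod k, ∀ a, g 0 a = d) :=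
  exists_chain_of_ncard_ess (by simp [hfull])

open Paper in
/-- if `f` depends essentially on all `n ≥ 1` variables, then some ordered
decision diagram of `f` has depth `n + 1`; equivalently there is a chain
`f = g_n ≻ g_{n-1} ≻ ⋯ ≻ g_0` of simple subfunctions (each step substituting a constant
for a variable essential at that moment) of length `n` ending in a constant function. -/
theorem exists_full_depth_odd {k n : ℕ} (hk : 2 ≤ k) (hn : 1 ≤ n) (f : Fn k n)
    (hfull : Ess f = Set.univ) :
    ∃ g : ℕ → Fn k n, g n = f ∧
      (∀ t < n, SimpleSub (g t) (g (t + 1))) ∧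
      (∃ d : ZMod k, ∀ a, g 0 a = d) :=
  exists_full_depth_odd_general f hfull
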